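/- arXiv:2305.08888 — 6 statements merged into one kernel-verified Lean document; each statement's English description precedes it below -/
import Mathlib

section
/- For every integer n, the polynomial f_n(X) = X^3 - nX^2 - (n+3)X - 1 is irreducible over the rationals. -/
open Polynomial

theorem shanks_cubic_irreducible (n : ℤ) :
    Irreducible (X ^ 3 - C (n : ℚ) * X ^ 2 - C ((n : ℚ) + 3) * X - C 1) := by
  set P : ℤ[X] := X ^ 3 - C n * X ^ 2 - C (n + 3) * X - C 1 with hP
  have hmap : (X ^ 3 - C (n : ℚ) * X ^ 2 - C ((n : ℚ) + 3) * X - C 1)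
      = P.map (Int.castRingHom ℚ) := by
    simp only [hP, Polynomial.map_sub, Polynomial.map_mul, Polynomial.map_pow, map_X, map_C,
      eq_intCast, Int.cast_add, Int.cast_ofNat, Int.cast_one]
    norm_num [map_ofNat]
  have hPmonic : P.Monic := by
    unfold P; monicity!
  have hdeg : P.natDegree = 3 := by
    unfold P; compute_degree!
  have hdeg' : (X ^ 3 - C (n : ℚ) * X ^ 2 - C ((n : ℚ) + 3) * X - C 1).natDegree = 3 := by
    rw [hmap, natDegree_map_eq_of_injective Int.cast_injective]
    exact hdeg
  rw [irreducible_iff_roots_eq_zero_of_degree_le_three (by omega) (by omega)]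
  rw [Multiset.eq_zero_iff_forall_notMem]
  intro x hx
  have hne : (X ^ 3 - C (n : ℚ) * X ^ 2 - C ((n : ℚ) + 3) * X - C 1) ≠ 0 := by
    intro h; rw [h] at hdeg'; simp at hdeg'
  rw [mem_roots hne] at hx
  have haev : aeval x P = 0 := by
    have := hx.eq_zero
    rw [hmap, eval_map] at this
    simpa [aeval_def] using this
  obtain ⟨r, hr, hdvd⟩ := exists_integer_of_is_root_of_monic hPmonic haev
  have hc0 : P.coeff 0 = -1 := by simp [hP, coeff_one]
  rw [hc0] at hdvd
  rw [hr, aeval_algebraMap_apply] at haev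
  have hz : aeval r P = 0 := by
    rwa [algebraMap_int_eq, eq_intCast, Int.cast_eq_zero] at haev
  have hzz : r ^ 3 - n * r ^ 2 - (n + 3) * r - 1 = 0 := by
    simpa [hP] using hz
  have : r = 1 ∨ r = -1 := by
    rcases Int.isUnit_iff.mp (isUnit_of_dvd_unit hdvd (by norm_num)) with h | h
    · exact Or.inl h
    · exact Or.inr h
  rcases this with rfl | rfl <;> omega
end

section
/- If ρ is a root of f_n(X) = X^3 - nX^2 - (n+3)X - 1 (in a field where 1 + ρ ≠ 0), then -1/(1+ρ) is also a root of f_n. -/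
def shanksCubic {K : Type*} [Field K] (n x : K) : K :=
  x ^ 3 - n * x ^ 2 - (n + 3) * x - 1

theorem shanksCubic_neg_one_div_one_add {K : Type*} [Field K] (n : K) {x : K} (hx : 1 + x ≠ 0) :
    shanksCubic n (-1 / (1 + x)) = -shanksCubic n x / (1 + x) ^ 3 := by
  unfold shanksCubic
  field_simp
  ring

theorem shanks_cubic_conjugate_root_general {K : Type*} [Field K] (n : ℤ) (ρ : K)
    (hρ : ρ ^ 3 - (n : K) * ρ ^ 2 - ((n : K) + 3) * ρ - 1 = 0) (h1 : 1 + ρ ≠ 0) :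
    (-1 / (1 + ρ)) ^ 3 - (n : K) * (-1 / (1 + ρ)) ^ 2 - ((n : K) + 3) * (-1 / (1 + ρ)) - 1 = 0 := by
  have hroot : shanksCubic (n : K) ρ = 0 := hρ
  show shanksCubic (n : K) (-1 / (1 + ρ)) = 0
  rw [shanksCubic_neg_one_div_one_add _ h1, hroot, neg_zero, zero_div]

theorem shanks_cubic_conjugate_root {K : Type*} [Field K] [CharZero K] (n : ℤ) (ρ : K)
    (hρ : ρ ^ 3 - (n : K) * ρ ^ 2 - ((n : K) + 3) * ρ - 1 = 0) (h1 : 1 + ρ ≠ 0) :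
    (-1 / (1 + ρ)) ^ 3 - (n : K) * (-1 / (1 + ρ)) ^ 2 - ((n : K) + 3) * (-1 / (1 + ρ)) - 1 = 0 :=
  shanks_cubic_conjugate_root_general n ρ hρ h1
end

section
/- If n ≡ 3 (mod 9), then in ℤ[ζ] (ζ a primitive cube root of unity) the element A_n/3 = n/3 + 1 + ζ is divisible by (1-ζ) but not by (1-ζ)^2. -/
open Polynomial

/-! With `n / 3 = 3k + 1`, the element is `3(k + 1) - (1 - ζ)`, and `3 = (1 - ζ)(2 + ζ)` gives
divisibility by `1 - ζ`. For the second part, reduce modulo `(1 - ζ)²`: the map `ζ ↦ 1 + ε` into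
the dual numbers over `𝔽₃` kills `(1 - ζ)²` but sends the element to `ε ≠ 0`. -/

theorem DualNumber.eps_ne_zero {K : Type*} [Zero K] [One K] [NeZero (1 : K)] :
    (DualNumber.eps : DualNumber K) ≠ 0 :=
  fun h => one_ne_zero (congrArg TrivSqZeroExt.snd h)

theorem DualNumber.three_eq_zero : (3 : DualNumber (ZMod 3)) = 0 := by
  rw [← map_ofNat (algebraMap (ZMod 3) (DualNumber (ZMod 3))) 3]
  simp only [map_eq_zero_iff _ (FaithfulSMul.algebraMap_injective _ _)]
  rfl

theorem one_sub_dvd_of_modEq_one {R : Type*} [CommRing R] {ζ : R} (hζ : ζ ^ 2 + ζ + 1 = 0)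
    {m : ℤ} (hm : m ≡ 1 [ZMOD 3]) : (1 - ζ) ∣ (m : R) + 1 + ζ := by
  obtain ⟨k, rfl⟩ : ∃ k, m = 3 * k + 1 := ⟨m / 3, by rw [Int.ModEq] at hm; omega⟩
  exact ⟨(k + 1) * (2 + ζ) - 1, by push_cast; linear_combination ((k : R) + 1) * hζ⟩

theorem not_one_sub_sq_dvd_of_modEq_one {R : Type*} [CommRing R] {ζ : R}
    (f : R →+* DualNumber (ZMod 3)) (hf : f ζ = 1 + DualNumber.eps)
    {m : ℤ} (hm : m ≡ 1 [ZMOD 3]) : ¬ (1 - ζ) ^ 2 ∣ (m : R) + 1 + ζ := by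
  obtain ⟨k, rfl⟩ : ∃ k, m = 3 * k + 1 := ⟨m / 3, by rw [Int.ModEq] at hm; omega⟩
  intro hdvd
  have h_sq : f ((1 - ζ) ^ 2) = 0 := by
    rw [map_pow, map_sub, map_one, hf, sub_add_cancel_left, neg_sq, sq, DualNumber.eps_mul_eps]
  have h_val : f ((3 * k + 1 : ℤ) + 1 + ζ) = DualNumber.eps := by
    rw [map_add, map_add, map_one, map_intCast, hf]
    push_cast
    linear_combination ((k : DualNumber (ZMod 3)) + 1) * DualNumber.three_eq_zero
  have := map_dvd f hdvd
  rw [h_sq, h_val, zero_dvd_iff] at this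
  exact DualNumber.eps_ne_zero this

/-- The reduction `ℤ[ζ] → ℤ[ζ]/(1 - ζ)² ≅ 𝔽₃[ε]`, with `ζ ↦ 1 + ε`. -/
noncomputable def AdjoinRoot.toDualNumber :
    AdjoinRoot (X ^ 2 + X + 1 : ℤ[X]) →+* DualNumber (ZMod 3) :=
  AdjoinRoot.lift (Int.castRingHom _) (1 + DualNumber.eps) (by
    simp only [eval₂_add, eval₂_pow, eval₂_X, eval₂_one]
    linear_combination DualNumber.eps_mul_eps (R := ZMod 3) +
      (1 + DualNumber.eps) * DualNumber.three_eq_zero)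

theorem An_div_three_valuation (n : ℤ) (hn : n ≡ 3 [ZMOD 9]) :
    letI R := AdjoinRoot (X ^ 2 + X + 1 : ℤ[X])
    letI ζ : R := AdjoinRoot.root _
    ((1 - ζ) ∣ ((n / 3 : ℤ) : R) + 1 + ζ) ∧ ¬ ((1 - ζ) ^ 2 ∣ ((n / 3 : ℤ) : R) + 1 + ζ) := by
  have hm : n / 3 ≡ 1 [ZMOD 3] := by rw [Int.ModEq] at hn ⊢; omega
  have hζ : AdjoinRoot.root (X ^ 2 + X + 1 : ℤ[X]) ^ 2 + AdjoinRoot.root _ + 1 = 0 := by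
    have := AdjoinRoot.eval₂_root (X ^ 2 + X + 1 : ℤ[X])
    simp only [eval₂_add, eval₂_pow, eval₂_X, eval₂_one] at this
    exact this
  exact ⟨one_sub_dvd_of_modEq_one hζ hm,
    not_one_sub_sq_dvd_of_modEq_one AdjoinRoot.toDualNumber (AdjoinRoot.lift_root _) hm⟩
end

section
/- Let g(X) = X^3 + b₁X^2 + c₁X + d₁ ∈ ℤ[X] be irreducible with root ρ, K = ℚ(ρ), and suppose integers s, a, t satisfy: (i) disc(1,ρ,ρ²) = s^6 a^2 D_K where D_K is the discriminant of K; (ii) (1/2)g''(t) ≡ 0 (mod s), g'(t) ≡ 0 (mod s²a), and g(t) ≡ 0 (mod s³a²). Then φ := (ρ - t)/s and ψ := (ρ² + (t+b₁)ρ + t² + b₁t + c₁)/(s²a) are algebraic integers and {1, φ, ψ} is an integral basis of K. -/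
open Polynomial NumberField

/-!
Put `x = ρ - t`. Taylor expansion at `t` gives `x³ + (g''(t)/2) x² + g'(t) x + g(t) = 0`, and the
divisibility hypotheses turn this into a monic integral cubic `φ³ + p φ² + a q φ + a² r = 0` for
`φ = x / s`, where `p = g''(t) / (2s)`, `q = g'(t) / (s² a)`, `r = g(t) / (s³ a²)`. Moreover
`ψ = (φ² + p φ + a q) / a`, so `φ ψ = -a r`, which makes `ψ` integral as well.
The change of basis from `(1, ρ, ρ²)` to `(1, φ, ψ)` is triangular with determinant `1 / (s³ a)`, so
`disc(1, φ, ψ) = D_K`; and a family of algebraic integers with discriminant `D_K` is an integral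
basis, because its transition matrix from an integral basis has determinant `±1`.
-/

theorem isIntegral_of_cubic {R : Type*} [CommRing R] {x : R} (p q r : ℤ)
    (h : x ^ 3 + p * x ^ 2 + q * x + r = 0) : IsIntegral ℤ x := by
  refine ⟨X ^ 3 + C p * X ^ 2 + C q * X + C r, by monicity!, ?_⟩
  change aeval x _ = 0
  simpa using h

theorem isIntegral_of_mul_eq_of_cubic {K : Type*} [Field K] {φ ψ : K} {p q r a : ℤ}
    (ha : (a : K) ≠ 0) (hφ : φ ^ 3 + p * φ ^ 2 + (a * q) * φ + a ^ 2 * r = 0)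
    (hψ : a * ψ = φ ^ 2 + p * φ + a * q) : IsIntegral ℤ ψ := by
  have hφψ : φ * ψ = -(a * r) := mul_left_cancel₀ ha (by linear_combination φ * hψ + hφ)
  have hψ_sq : ψ ^ 2 = q * ψ - r * φ - p * r := mul_left_cancel₀ (pow_ne_zero 2 ha) <| by
    linear_combination (a * ψ + φ ^ 2 + p * φ) * hψ + (φ + p) * hφ
  refine isIntegral_of_cubic (-q) (p * r) (-(a * r ^ 2)) ?_
  push_cast
  linear_combination ψ * hψ_sq - r * hφψ

theorem isIntegral_shift_of_cubic {K : Type*} [Field K] [CharZero K] {ρ : K} {b c d s a t : ℤ}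
    (hρ : ρ ^ 3 + b * ρ ^ 2 + c * ρ + d = 0) (hs : s ≠ 0) (ha : a ≠ 0)
    (h2 : s ∣ 3 * t + b) (h1 : s ^ 2 * a ∣ 3 * t ^ 2 + 2 * b * t + c)
    (h0 : s ^ 3 * a ^ 2 ∣ t ^ 3 + b * t ^ 2 + c * t + d) :
    IsIntegral ℤ ((ρ - t) / s) ∧
      IsIntegral ℤ ((ρ ^ 2 + (t + b) * ρ + t ^ 2 + b * t + c) / (s ^ 2 * a)) := by
  obtain ⟨p, hp⟩ := h2
  obtain ⟨q, hq⟩ := h1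
  obtain ⟨r, hr⟩ := h0
  have hs : (s : K) ≠ 0 := Int.cast_ne_zero.mpr hs
  have ha : (a : K) ≠ 0 := Int.cast_ne_zero.mpr ha
  set φ := (ρ - t) / s
  set ψ := (ρ ^ 2 + (t + b) * ρ + t ^ 2 + b * t + c) / (s ^ 2 * a)
  have hsφ : s * φ = ρ - t := mul_div_cancel₀ _ hs
  have hsaψ : s ^ 2 * a * ψ = ρ ^ 2 + (t + b) * ρ + t ^ 2 + b * t + c :=
    mul_div_cancel₀ _ (by positivity)
  have hp : (3 * t + b : K) = s * p := by exact_mod_cast hp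
  have hq : (3 * t ^ 2 + 2 * b * t + c : K) = s ^ 2 * a * q := by exact_mod_cast hq
  have hr : (t ^ 3 + b * t ^ 2 + c * t + d : K) = s ^ 3 * a ^ 2 * r := by exact_mod_cast hr
  have hφ : φ ^ 3 + p * φ ^ 2 + (a * q) * φ + a ^ 2 * r = 0 :=
    mul_left_cancel₀ (pow_ne_zero 3 hs) <| by
      linear_combination ((s * φ) ^ 2 + s * φ * (ρ - t) + (ρ - t) ^ 2 + s * p * (s * φ + (ρ - t))
        + s ^ 2 * a * q) * hsφ - (ρ - t) ^ 2 * hp - (ρ - t) * hq - hr + hρ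
  have hψ : a * ψ = φ ^ 2 + p * φ + a * q := mul_left_cancel₀ (pow_ne_zero 2 hs) <| by
    linear_combination hsaψ - (s * φ + (ρ - t) + s * p) * hsφ + (ρ - t) * hp + hq
  exact ⟨isIntegral_of_cubic p (a * q) (a ^ 2 * r) (by push_cast; exact hφ),
    isIntegral_of_mul_eq_of_cubic ha hφ hψ⟩

theorem Algebra.discr_fin_three_triangular {A B : Type*} [CommRing A] [CommRing B] [Algebra A B]
    (e₀ e₁ e₂ : B) (c₁₀ c₁₁ c₂₀ c₂₁ c₂₂ : A) :
    Algebra.discr A ![e₀, c₁₀ • e₀ + c₁₁ • e₁, c₂₀ • e₀ + c₂₁ • e₁ + c₂₂ • e₂] =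
      (c₁₁ * c₂₂) ^ 2 * Algebra.discr A ![e₀, e₁, e₂] := by
  have : ![e₀, c₁₀ • e₀ + c₁₁ • e₁, c₂₀ • e₀ + c₂₁ • e₁ + c₂₂ • e₂] =
      Matrix.mulVec (!![1, 0, 0; c₁₀, c₁₁, 0; c₂₀, c₂₁, c₂₂].map (algebraMap A B)) ![e₀, e₁, e₂] := by
    ext i
    fin_cases i <;> simp [Matrix.mulVec, dotProduct, Fin.sum_univ_three, Algebra.smul_def]
  rw [this, Algebra.discr_of_matrix_mulVec, Matrix.det_fin_three]
  simp

theorem Algebra.discr_shift_div_eq {L : Type*} [Field L] [CharZero L] (ρ : L) {b c s a t : ℤ}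
    (hs : s ≠ 0) (ha : a ≠ 0) :
    Algebra.discr ℚ ![1, (ρ - t) / s, (ρ ^ 2 + (t + b) * ρ + t ^ 2 + b * t + c) / (s ^ 2 * a)] =
      Algebra.discr ℚ ![1, ρ, ρ ^ 2] / (s ^ 3 * a) ^ 2 := by
  have : ![1, (ρ - t) / s, (ρ ^ 2 + (t + b) * ρ + t ^ 2 + b * t + c) / (s ^ 2 * a)] =
      ![1, (-t / s : ℚ) • 1 + (1 / s : ℚ) • ρ,
        ((t ^ 2 + b * t + c) / (s ^ 2 * a) : ℚ) • 1 + ((t + b) / (s ^ 2 * a) : ℚ) • ρ +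
          (1 / (s ^ 2 * a) : ℚ) • ρ ^ 2] := by
    ext i
    fin_cases i <;> simp [Algebra.smul_def] <;> ring
  rw [this, Algebra.discr_fin_three_triangular]
  field_simp

theorem Algebra.exists_basis_of_discr_eq {A ι : Type*} [CommRing A] [Fintype ι] [DecidableEq ι]
    (b : Module.Basis ι ℤ A) (hb : Algebra.discr ℤ b ≠ 0) {v : ι → A}
    (hv : Algebra.discr ℤ v = Algebra.discr ℤ b) :
    ∃ B : Module.Basis ι ℤ A, ⇑B = v := by
  have hsq : (b.toMatrix v).det ^ 2 = 1 := by
    have := Algebra.discr_of_matrix_vecMul (b : ι → A) (b.toMatrix v)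
    rw [b.toMatrix_map_vecMul, hv] at this
    exact mul_right_cancel₀ hb (by rw [one_mul, ← this])
  have hunit : IsUnit (b.det v) := by
    rw [b.det_apply]
    exact .of_mul_eq_one _ (by rw [← sq, hsq])
  obtain ⟨hli, hsp⟩ := b.is_basis_iff_det.mpr hunit
  exact ⟨.mk hli hsp.ge, Module.Basis.coe_mk _ _⟩

theorem Algebra.coe_discr_int {K ι : Type*} [Field K] [NumberField K] [Fintype ι] [DecidableEq ι]
    (v : ι → 𝓞 K) : (Algebra.discr ℤ v : ℚ) = Algebra.discr ℚ (fun i ↦ (v i : K)) := by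
  rw [Algebra.discr_def, Algebra.discr_def, ← eq_intCast (Int.castRingHom ℚ), RingHom.map_det]
  congr 1
  ext i j
  simp [Algebra.traceMatrix_apply, Algebra.traceForm_apply, Algebra.coe_trace_int]

theorem NumberField.exists_basis_of_discr_eq {K ι : Type*} [Field K] [NumberField K]
    [Fintype ι] [DecidableEq ι] (hι : Fintype.card ι = Module.finrank ℚ K) (v : ι → 𝓞 K)
    (hv : Algebra.discr ℚ (fun i ↦ (v i : K)) = discr K) :
    ∃ B : Module.Basis ι ℤ (𝓞 K), ⇑B = v := by
  have hrank : Module.finrank ℤ (𝓞 K) = Fintype.card ι := by rw [RingOfIntegers.rank, hι]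
  let b := (Module.finBasisOfFinrankEq ℤ (𝓞 K) hrank).reindex (Fintype.equivFin ι).symm
  refine Algebra.exists_basis_of_discr_eq b (by rw [discr_eq_discr]; exact discr_ne_zero K) ?_
  rw [discr_eq_discr]
  exact_mod_cast (Algebra.coe_discr_int v).trans hv

theorem natDegree_minpoly_rat_of_irreducible {L : Type*} [Field L] [Algebra ℚ L] {g : ℤ[X]}
    (hmon : g.Monic) (hirr : Irreducible g) {x : L} (hx : aeval x g = 0) :
    (minpoly ℚ x).natDegree = g.natDegree := by
  rw [← minpoly.eq_of_irreducible_of_monic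
    (hmon.irreducible_iff_irreducible_map_fraction_map.mp hirr)
    (by rwa [aeval_map_algebraMap]) (hmon.map _), hmon.natDegree_map]

theorem exists_basis_pow_of_adjoin_eq_top {K L : Type*} [Field K] [CommRing L] [Algebra K L]
    {x : L} (hx : IsIntegral K x) (hgen : Algebra.adjoin K {x} = ⊤) {n : ℕ}
    (hn : (minpoly K x).natDegree = n) :
    ∃ b : Module.Basis (Fin n) K L, ⇑b = fun i : Fin n ↦ x ^ (i : ℕ) := by
  subst hn
  exact ⟨_, (PowerBasis.ofAdjoinEqTop hx hgen).coe_basis⟩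

theorem integral_basis_of_cubic
    {K : Type*} [Field K] [NumberField K]
    (b₁ c₁ d₁ : ℤ) (g : ℤ[X]) (hg : g = X ^ 3 + C b₁ * X ^ 2 + C c₁ * X + C d₁)
    (hirr : Irreducible g) (ρ : K) (hρ : aeval ρ g = 0)
    (hgen : Algebra.adjoin ℚ {ρ} = ⊤)
    (s a t : ℤ)
    (hdisc : Algebra.discr ℚ ![1, ρ, ρ ^ 2] =
      ((s ^ 6 * a ^ 2 * NumberField.discr K : ℤ) : ℚ))
    (h2 : s ∣ (derivative (derivative g)).eval t / 2)
    (h1 : s ^ 2 * a ∣ (derivative g).eval t)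
    (h0 : s ^ 3 * a ^ 2 ∣ g.eval t)
    (φ ψ : K)
    (hφ : φ = (ρ - t) / s)
    (hψ : ψ = (ρ ^ 2 + ((t : K) + b₁) * ρ + t ^ 2 + b₁ * t + c₁) / (s ^ 2 * a)) :
    IsIntegral ℤ φ ∧ IsIntegral ℤ ψ ∧
      ∃ B : Module.Basis (Fin 3) ℤ (𝓞 K), (B 0 : K) = 1 ∧ (B 1 : K) = φ ∧ (B 2 : K) = ψ := by
  have hdeg : (minpoly ℚ ρ).natDegree = 3 := by
    rw [natDegree_minpoly_rat_of_irreducible (by rw [hg]; monicity!) hirr hρ, hg]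
    compute_degree!
  obtain ⟨bρ, hbρ⟩ := exists_basis_pow_of_adjoin_eq_top (.of_finite ℚ ρ) hgen hdeg
  obtain ⟨⟨hs, ha⟩, -⟩ : (s ≠ 0 ∧ a ≠ 0) ∧ discr K ≠ 0 := by
    have := Algebra.discr_not_zero_of_basis ℚ bρ
    rw [hbρ, show (fun i : Fin 3 ↦ ρ ^ (i : ℕ)) = ![1, ρ, ρ ^ 2] by ext i; fin_cases i <;> simp,
      hdisc] at this
    simpa using this
  obtain ⟨hφint, hψint⟩ : IsIntegral ℤ φ ∧ IsIntegral ℤ ψ := by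
    rw [hφ, hψ]
    refine isIntegral_shift_of_cubic (by simpa [hg] using hρ) hs ha ?_ ?_ ?_
    · convert h2 using 1; simp [hg]; omega
    · convert h1 using 1; simp [hg]; ring
    · convert h0 using 1; simp [hg]
  have hdiscφψ : Algebra.discr ℚ ![1, φ, ψ] = discr K := by
    rw [hφ, hψ, Algebra.discr_shift_div_eq ρ hs ha, hdisc]
    push_cast
    field_simp
  obtain ⟨B, hB⟩ := NumberField.exists_basis_of_discr_eq
    (by simp [Module.finrank_eq_card_basis bρ]) ![1, ⟨φ, hφint⟩, ⟨ψ, hψint⟩]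
    (by convert hdiscφψ using 2; ext i; fin_cases i <;> rfl)
  exact ⟨hφint, hψint, B, by simp [hB], by simp [hB]; rfl, by simp [hB]; rfl⟩
end

section
/- Suppose n ≡ 3 (mod 9) and n ≢ 12 (mod 27), and write Δ_n = de²c³ as usual. Then 3 ∤ d, 3 ∤ e, and 3 divides c exactly once (v_3(c) = 1). -/
theorem three_adic_dec_case3 (n : ℤ) (hn : n % 9 = 3) (hn27 : ¬ n % 27 = 12)
    (d e c : ℤ) (hd : 0 < d) (he : 0 < e) (hc : 0 < c)
    (hsqd : Squarefree d) (hsqe : Squarefree e) (hde : IsCoprime d e)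
    (hΔ : n ^ 2 + 3 * n + 9 = d * e ^ 2 * c ^ 3) :
    ¬ (3 : ℤ) ∣ d ∧ ¬ (3 : ℤ) ∣ e ∧ ((3 : ℤ) ∣ c ∧ ¬ (3 : ℤ) ^ 2 ∣ c) := by
  obtain ⟨k, hk⟩ : ∃ k, n = 9 * k + 3 := ⟨n / 9, by omega⟩
  have hΔ' : d * e ^ 2 * c ^ 3 = 27 * (3 * k ^ 2 + 3 * k + 1) := by
    rw [← hΔ, hk]; ring
  have hmpos : 0 < 3 * k ^ 2 + 3 * k + 1 := by nlinarith [sq_nonneg (2 * k + 1)]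
  have hm3 : ¬ (3 : ℤ) ∣ (3 * k ^ 2 + 3 * k + 1) := by
    obtain ⟨j, hj⟩ : ∃ j, 3 * k ^ 2 + 3 * k + 1 = 3 * j + 1 := ⟨k ^ 2 + k, by ring⟩
    rintro ⟨t, ht⟩; omega
  set D := d.natAbs with hD
  set E := e.natAbs with hE
  set C := c.natAbs with hC
  set M := (3 * k ^ 2 + 3 * k + 1).natAbs with hM
  have hD0 : D ≠ 0 := Int.natAbs_ne_zero.mpr hd.ne'
  have hE0 : E ≠ 0 := Int.natAbs_ne_zero.mpr he.ne'
  have hC0 : C ≠ 0 := Int.natAbs_ne_zero.mpr hc.ne'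
  have key : D * E ^ 2 * C ^ 3 = 27 * M := by
    have := congrArg Int.natAbs hΔ'
    simpa [Int.natAbs_mul, Int.natAbs_pow] using this
  have hp : Nat.Prime 3 := by norm_num
  have hM3 : ¬ 3 ∣ M := by
    intro h
    exact hm3 (Int.natAbs_dvd_natAbs.mp (by simpa using h))
  -- factorization at 3
  have hMf : M.factorization 3 = 0 := Nat.factorization_eq_zero_of_not_dvd hM3
  have hM0 : M ≠ 0 := Int.natAbs_ne_zero.mpr hmpos.ne'
  have hfact : D.factorization 3 + (2 * E.factorization 3 + 3 * C.factorization 3) = 3 := by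
    have h1 := congrArg (fun x => x.factorization 3) key
    rw [Nat.factorization_mul (mul_ne_zero hD0 (pow_ne_zero 2 hE0)) (pow_ne_zero 3 hC0),
        Nat.factorization_mul hD0 (pow_ne_zero 2 hE0),
        Nat.factorization_mul (by norm_num) hM0,
        Nat.factorization_pow, Nat.factorization_pow] at h1
    have h27 : (27 : ℕ).factorization 3 = 3 := by
      have : (27 : ℕ) = 3 ^ 3 := by norm_num
      rw [this, hp.factorization_pow]; simp
    simp only [Finsupp.add_apply, Finsupp.smul_apply, smul_eq_mul, h27, hMf] at h1
    omega
  have hDle : D.factorization 3 ≤ 1 := (Int.squarefree_natAbs.mpr hsqd).natFactorization_le_one 3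
  have hEle : E.factorization 3 ≤ 1 := (Int.squarefree_natAbs.mpr hsqe).natFactorization_le_one 3
  have hcop : Nat.Coprime D E := Int.isCoprime_iff_gcd_eq_one.mp hde
  have hnotboth : ¬ (1 ≤ D.factorization 3 ∧ 1 ≤ E.factorization 3) := by
    rintro ⟨h1, h2⟩
    have d1 : 3 ∣ D := (Nat.Prime.dvd_iff_one_le_factorization hp hD0).mpr h1
    have d2 : 3 ∣ E := (Nat.Prime.dvd_iff_one_le_factorization hp hE0).mpr h2
    have : (3 : ℕ) ∣ 1 := hcop ▸ Nat.dvd_gcd d1 d2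
    norm_num at this
  have hDf : D.factorization 3 = 0 := by omega
  have hEf : E.factorization 3 = 0 := by omega
  have hCf : C.factorization 3 = 1 := by omega
  refine ⟨?_, ?_, ?_, ?_⟩
  · intro h
    have : 3 ∣ D := Int.natAbs_dvd_natAbs.mpr h
    have := (Nat.Prime.dvd_iff_one_le_factorization hp hD0).mp this
    omega
  · intro h
    have : 3 ∣ E := Int.natAbs_dvd_natAbs.mpr h
    have := (Nat.Prime.dvd_iff_one_le_factorization hp hE0).mp this
    omega
  · have : 3 ∣ C := (Nat.Prime.dvd_iff_one_le_factorization hp hC0).mpr (by omega)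
    exact Int.natAbs_dvd_natAbs.mp (by simpa using this)
  · intro h
    have h9 : (3 : ℕ) ^ 2 ∣ C := by
      have := Int.natAbs_dvd_natAbs.mpr h
      simpa [Int.natAbs_pow] using this
    have := (Nat.Prime.pow_dvd_iff_le_factorization hp hC0).mp h9
    omega
end

section
/- Suppose n ≡ 0 or 6 (mod 9), and write Δ_n = de²c³ as usual. Then 3 ∤ d, v_3(e) = 1, and 3 ∤ c. -/
theorem three_adic_dec_case06 (n : ℤ) (hn : n % 9 = 0 ∨ n % 9 = 6)
    (d e c : ℤ) (hd : 0 < d) (he : 0 < e) (hc : 0 < c)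
    (hsqd : Squarefree d) (hsqe : Squarefree e) (hde : IsCoprime d e)
    (hΔ : n ^ 2 + 3 * n + 9 = d * e ^ 2 * c ^ 3) :
    ¬ (3 : ℤ) ∣ d ∧ ((3 : ℤ) ∣ e ∧ ¬ (3 : ℤ) ^ 2 ∣ e) ∧ ¬ (3 : ℤ) ∣ c := by
  have p3 : Prime (3 : ℤ) := Int.prime_three
  have hiu : ¬ IsUnit (3 : ℤ) := p3.not_unit
  have key : (9 : ℤ) ∣ d * e ^ 2 * c ^ 3 ∧ ¬ (27 : ℤ) ∣ d * e ^ 2 * c ^ 3 := by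
    rw [← hΔ]
    rcases hn with h | h
    · obtain ⟨k, hk⟩ : ∃ k, n = 9 * k := ⟨n / 9, by omega⟩
      obtain ⟨m, hm⟩ : ∃ m, n ^ 2 = 81 * m := ⟨k ^ 2, by rw [hk]; ring⟩
      constructor <;> omega
    · obtain ⟨k, hk⟩ : ∃ k, n = 9 * k + 6 := ⟨n / 9, by omega⟩
      obtain ⟨m, hm⟩ : ∃ m, n ^ 2 = 81 * m + 108 * k + 36 := ⟨k ^ 2, by rw [hk]; ring⟩
      constructor <;> omega
  obtain ⟨h9, h27⟩ := key
  have hc3 : ¬ (3 : ℤ) ∣ c := by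
    rintro ⟨c', rfl⟩
    exact h27 ⟨d * e ^ 2 * c' ^ 3, by ring⟩
  have hd3 : ¬ (3 : ℤ) ∣ d := by
    rintro ⟨d', rfl⟩
    have hd'3 : ¬ (3 : ℤ) ∣ d' := fun ⟨t, ht⟩ => hiu (hsqd 3 ⟨t, by rw [ht]; ring⟩)
    obtain ⟨t, ht⟩ := h9
    have heq : (3 : ℤ) * (d' * e ^ 2 * c ^ 3) = 3 * (3 * t) := by
      rw [show (3 : ℤ) * (3 * t) = 9 * t by ring, ← ht]; ring
    have hdvd : (3 : ℤ) ∣ d' * e ^ 2 * c ^ 3 :=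
      ⟨t, mul_left_cancel₀ (by norm_num) heq⟩
    rcases p3.dvd_mul.mp hdvd with h | h
    · rcases p3.dvd_mul.mp h with h | h
      · exact hd'3 h
      · exact hiu (hde.isUnit_of_dvd' (dvd_mul_right 3 d') (p3.dvd_of_dvd_pow h))
    · exact hc3 (p3.dvd_of_dvd_pow h)
  have he3 : (3 : ℤ) ∣ e := by
    have h3 : (3 : ℤ) ∣ d * e ^ 2 * c ^ 3 := dvd_trans (by norm_num) h9
    rcases p3.dvd_mul.mp h3 with h | h
    · rcases p3.dvd_mul.mp h with h | h
      · exact absurd h hd3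
      · exact p3.dvd_of_dvd_pow h
    · exact absurd (p3.dvd_of_dvd_pow h) hc3
  have he9 : ¬ (3 : ℤ) ^ 2 ∣ e := by
    intro h
    rw [pow_two] at h
    exact hiu (hsqe 3 h)
  exact ⟨hd3, ⟨he3, he9⟩, hc3⟩
end
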